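/- arXiv:1911.11331 — 7 statements merged into one kernel-verified Lean document; each statement's English description precedes it below -/
import Mathlib

section
/- Let G be a groupoid and σ ∈ G. Define Σ_σ = {σ, σ⁻¹} ∪ (G₀ \ {d(σ), r(σ)}) if d(σ) ≠ r(σ), and Σ_σ = {σ} ∪ (G₀ \ {d(σ)}) if d(σ) = r(σ). Then Σ_σ is invertible in the monoid P(G) of non-empty subsets of G with operation Σ * Σ' = { στ : σ ∈ Σ, τ ∈ Σ', d(σ) = r(τ) } and identity G₀. -/
open CategoryTheory

/-- The arrows of a groupoid, bundled with their endpoints. -/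
abbrev GArrow (G : Type*) [Groupoid G] := Σ a b : G, a ⟶ b

namespace GArrow

variable {G : Type*} [Groupoid G]

/-- The unit arrow at an object. -/
def unit (a : G) : GArrow G := ⟨a, a, 𝟙 a⟩

/-- The inverse arrow `σ⁻¹`. -/
def ginv (σ : GArrow G) : GArrow G := ⟨σ.2.1, σ.1, Groupoid.inv σ.2.2⟩

/-- `Composable σ τ` means `d(σ) = r(τ)`, i.e. the product `στ` is defined. -/
def Composable (σ τ : GArrow G) : Prop := σ.1 = τ.2.1

/-- The product `στ` when `d(σ) = r(τ)`. -/
def comp (σ τ : GArrow G) (h : Composable σ τ) : GArrow G :=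
  ⟨τ.1, σ.2.1, τ.2.2 ≫ eqToHom h.symm ≫ σ.2.2⟩

/-- The unit space `G₀`, as a set of arrows. -/
def GUnits (G : Type*) [Groupoid G] : Set (GArrow G) := Set.range unit

/-- The product of two sets of arrows: `Σ * Σ' = { στ : σ ∈ Σ, τ ∈ Σ', d(σ) = r(τ) }`. -/
def setMul (A B : Set (GArrow G)) : Set (GArrow G) :=
  {ρ | ∃ σ ∈ A, ∃ τ ∈ B, ∃ h : Composable σ τ, ρ = comp σ τ h}

end GArrow

/-- An object unital `G`-grading on an associative, not necessarily unital, ring `R`: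
`R = ⊕_{σ ∈ G} R_σ`, `R_σ R_τ ⊆ R_{στ}` for composable pairs, `R_σ R_τ = 0` otherwise,
each `R_e` (`e ∈ G₀`) is unital with identity `u e`, and
`1_{R_{r(σ)}} r = r 1_{R_{d(σ)}} = r` for every `r ∈ R_σ`. -/
structure OUGrading (G : Type*) [Groupoid G] (R : Type*) [NonUnitalRing R] where
  component : GArrow G → AddSubgroup R
  sup_eq_top : (⨆ σ : GArrow G, component σ) = ⊤
  indep : iSupIndep component
  mul_mem : ∀ (σ τ : GArrow G) (h : GArrow.Composable σ τ), ∀ r ∈ component σ,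
    ∀ s ∈ component τ, r * s ∈ component (GArrow.comp σ τ h)
  mul_eq_zero : ∀ (σ τ : GArrow G), ¬ GArrow.Composable σ τ → ∀ r ∈ component σ,
    ∀ s ∈ component τ, r * s = 0
  /-- The identity of the unital ring `R_e`, for each object (unit) `e`. -/
  u : G → R
  u_mem : ∀ a : G, u a ∈ component (GArrow.unit a)
  u_left : ∀ σ : GArrow G, ∀ r ∈ component σ, u σ.2.1 * r = r
  u_right : ∀ σ : GArrow G, ∀ r ∈ component σ, r * u σ.1 = r

/-- The axioms of a left module over a not necessarily unital ring. -/
structure NUModule (R M : Type*) [NonUnitalRing R] [AddCommGroup M] [SMul R M] : Prop where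
  smul_add : ∀ (r : R) (m n : M), r • (m + n) = r • m + r • n
  add_smul : ∀ (r s : R) (m : M), (r + s) • m = r • m + s • m
  mul_smul : ∀ (r s : R) (m : M), (r * s) • m = r • (s • m)

/-- A `G`-graded left module over a ring `R` with object unital `G`-grading `gr`. -/
structure GrModule {G : Type*} [Groupoid G] {R : Type*} [NonUnitalRing R]
    (gr : OUGrading G R) (M : Type*) [AddCommGroup M] [SMul R M] where
  smul_add : ∀ (r : R) (m n : M), r • (m + n) = r • m + r • n
  add_smul : ∀ (r s : R) (m : M), (r + s) • m = r • m + s • m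
  mul_smul : ∀ (r s : R) (m : M), (r * s) • m = r • (s • m)
  component : GArrow G → AddSubgroup M
  sup_eq_top : (⨆ σ : GArrow G, component σ) = ⊤
  indep : iSupIndep component
  smul_mem : ∀ (σ τ : GArrow G) (h : GArrow.Composable σ τ), ∀ r ∈ gr.component σ,
    ∀ m ∈ component τ, r • m ∈ component (GArrow.comp σ τ h)
  smul_eq_zero : ∀ (σ τ : GArrow G), ¬ GArrow.Composable σ τ → ∀ r ∈ gr.component σ,
    ∀ m ∈ component τ, r • m = 0

/-- A graded module is graded unital if `1_{R_{r(σ)}} • m = m` for all homogeneous `m`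
of degree `σ`. -/
def GrModule.IsUnital {G : Type*} [Groupoid G] {R : Type*} [NonUnitalRing R]
    {gr : OUGrading G R} {M : Type*} [AddCommGroup M] [SMul R M]
    (gm : GrModule gr M) : Prop :=
  ∀ σ : GArrow G, ∀ m ∈ gm.component σ, gr.u σ.2.1 • m = m

/-- A graded homomorphism between graded modules with homogeneous components `cM`, `cN`. -/
def IsGrHom {G : Type*} [Groupoid G] {R : Type*} [NonUnitalRing R]
    {M N : Type*} [AddCommGroup M] [AddCommGroup N] [SMul R M] [SMul R N]
    (cM : GArrow G → AddSubgroup M) (cN : GArrow G → AddSubgroup N) (f : M → N) : Prop :=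
  (∀ x y : M, f (x + y) = f x + f y) ∧ (∀ (r : R) (x : M), f (r • x) = r • f x) ∧
    (∀ σ : GArrow G, ∀ x ∈ cM σ, f x ∈ cN σ)

/-- A graded submodule: an additive subgroup closed under the `R`-action which is the
sum of its homogeneous components. -/
def IsGrSubmodule {G : Type*} [Groupoid G] {R : Type*} [NonUnitalRing R]
    {gr : OUGrading G R} {M : Type*} [AddCommGroup M] [SMul R M]
    (gm : GrModule gr M) (N : AddSubgroup M) : Prop :=
  (∀ (r : R), ∀ m ∈ N, r • m ∈ N) ∧ N = ⨆ σ : GArrow G, (N ⊓ gm.component σ)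

open Classical in
/-- The homogeneous component of degree `τ` of the `σ'`-suspension `R(σ')`:
`R(σ')_τ = R_{τσ'}` if `(τ, σ')` is composable and `{0}` otherwise. -/
noncomputable def suspComponent {G : Type*} [Groupoid G] {R : Type*} [NonUnitalRing R]
    (gr : OUGrading G R) (σ' τ : GArrow G) : AddSubgroup R :=
  if h : GArrow.Composable τ σ' then gr.component (GArrow.comp τ σ' h) else ⊥

/-- The `σ'`-suspension `R(σ') = ⊕_τ R(σ')_τ` of `R`, as an additive subgroup of `R`. -/
noncomputable def suspension {G : Type*} [Groupoid G] {R : Type*} [NonUnitalRing R]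
    (gr : OUGrading G R) (σ' : GArrow G) : AddSubgroup R :=
  ⨆ τ : GArrow G, suspComponent gr σ' τ

/-- A graded homomorphism from a graded left ideal `S` of `R` (with homogeneous
components `cS`) to a graded module with components `cN`. -/
def IsGrHomOn {G : Type*} [Groupoid G] {R N : Type*} [NonUnitalRing R]
    [AddCommGroup N] [SMul R N] {S : AddSubgroup R}
    (cS : GArrow G → AddSubgroup R) (cN : GArrow G → AddSubgroup N) (f : ↥S → N) : Prop :=
  (∀ x y : ↥S, f (x + y) = f x + f y) ∧
  (∀ (r : R) (x y : ↥S), (y : R) = r * (x : R) → f y = r • f x) ∧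
  (∀ τ : GArrow G, ∀ x : ↥S, (x : R) ∈ cS τ → f x ∈ cN τ)

/-- A graded module is free by suspension if it is the internal direct sum of graded
submodules, each gradedly isomorphic to a suspension `R(σᵢ)` of `R`. -/
noncomputable def FreeBySuspension {G : Type*} [Groupoid G] {R : Type*} [NonUnitalRing R]
    {gr : OUGrading G R} {M : Type*} [AddCommGroup M] [SMul R M]
    (gm : GrModule gr M) : Prop :=
  ∃ (ι : Type*) (σs : ι → GArrow G) (f : ∀ i : ι, ↥(suspension gr (σs i)) → M),
    (∀ i : ι, IsGrHomOn (suspComponent gr (σs i)) gm.component (f i)) ∧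
    (∀ i : ι, Function.Injective (f i)) ∧
    iSupIndep (fun i : ι => AddSubgroup.closure (Set.range (f i))) ∧
    (⨆ i : ι, AddSubgroup.closure (Set.range (f i))) = ⊤

/-- The set of graded homomorphisms `R → N` of degree `σ`. -/
def HomDeg {G : Type*} [Groupoid G] {R N : Type*} [NonUnitalRing R]
    [AddCommGroup N] [SMul R N] (gr : OUGrading G R)
    (cN : GArrow G → AddSubgroup N) (σ : GArrow G) : Set (R → N) :=
  {f | (∀ x y : R, f (x + y) = f x + f y) ∧ (∀ r x : R, f (r * x) = r • f x) ∧
    (∀ (τ : GArrow G) (h : GArrow.Composable τ σ), ∀ x ∈ gr.component τ,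
        f x ∈ cN (GArrow.comp τ σ h)) ∧
    (∀ τ : GArrow G, ¬ GArrow.Composable τ σ → ∀ x ∈ gr.component τ, f x = 0)}

/-- `HOM_R(R, N) = ⊕_σ HOM_R(R, N)_σ`, the additive group generated by the graded
homomorphisms of some degree. -/
def HOM {G : Type*} [Groupoid G] {R N : Type*} [NonUnitalRing R]
    [AddCommGroup N] [SMul R N] (gr : OUGrading G R)
    (cN : GArrow G → AddSubgroup N) : AddSubgroup (R → N) :=
  AddSubgroup.closure (⋃ σ : GArrow G, HomDeg gr cN σ)

/-- The left `R`-action `(r · f)(x) = f(x r)` on maps `R → N`. -/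
def rAct {R N : Type*} [NonUnitalRing R] (r : R) (f : R → N) : R → N :=
  fun x => f (x * r)

/-- `R · HOM_R(R, N)`, the unitary part of `HOM_R(R, N)` under the action `rAct`. -/
def RHOM {G : Type*} [Groupoid G] {R N : Type*} [NonUnitalRing R]
    [AddCommGroup N] [SMul R N] (gr : OUGrading G R)
    (cN : GArrow G → AddSubgroup N) : AddSubgroup (R → N) :=
  AddSubgroup.closure {g | ∃ (r : R), ∃ f ∈ HOM gr cN, g = rAct r f}

/-- A bundled graded unital left `R`-module. -/
structure GrUMod {G : Type*} [Groupoid G] {R : Type*} [NonUnitalRing R]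
    (gr : OUGrading G R) where
  carrier : Type*
  [acg : AddCommGroup carrier]
  [sm : SMul R carrier]
  str : GrModule gr carrier
  unital : str.IsUnital

attribute [instance] GrUMod.acg GrUMod.sm

open Classical in
/-- The set `Σ_σ`. -/
noncomputable def SigmaSet {G : Type*} [Groupoid G] (σ : GArrow G) : Set (GArrow G) :=
  if σ.1 = σ.2.1 then
    {σ} ∪ (GArrow.GUnits G \ {GArrow.unit σ.1})
  else
    {σ, GArrow.ginv σ} ∪ (GArrow.GUnits G \ {GArrow.unit σ.1, GArrow.unit σ.2.1})

/-! `Σ_σ` is a global bisection of `G`: `d` and `r` both restrict to bijections `Σ_σ → G₀`,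
since `σ` (and `σ⁻¹`) account for the objects `d(σ)`, `r(σ)` and the units for all others.
For a global bisection `S` and `S⁻¹ = {τ | τ⁻¹ ∈ S}`: if `s ∈ S` and `τ ∈ S⁻¹` are composable,
then `s` and `τ⁻¹` have the same domain, so `τ = s⁻¹` and `sτ` is a unit; and each unit `e`
is `s s⁻¹` for the `s ∈ S` with `r(s) = e`. So `S * S⁻¹ = G₀`, and `S⁻¹ * S = G₀` is the same
fact for the global bisection `S⁻¹`. -/

open Set

theorem Set.BijOn.union_image_compl {α β : Type*} {f : α → β} {g : β → α}
    (hfg : Function.LeftInverse f g) {s : Set α} {t : Set β} (h : BijOn f s t) :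
    BijOn f (s ∪ g '' tᶜ) univ := by
  have hg : BijOn f (g '' tᶜ) tᶜ := by
    refine ⟨?_, ?_, ?_⟩
    · rintro _ ⟨y, hy, rfl⟩
      rwa [hfg y]
    · rintro _ ⟨y, -, rfl⟩ _ ⟨z, -, rfl⟩ hyz
      rw [hfg y, hfg z] at hyz
      exact congrArg g hyz
    · intro y hy
      exact ⟨g y, mem_image_of_mem g hy, hfg y⟩
  have hdisj : Disjoint s (g '' tᶜ) :=
    (disjoint_compl_right.preimage f).mono h.mapsTo hg.mapsTo
  rw [← union_compl_self t]
  exact h.union hg ((injOn_union hdisj).2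
    ⟨h.injOn, hg.injOn, fun x hx y hy hxy => hg.mapsTo hy (hxy ▸ h.mapsTo hx)⟩)

namespace GArrow

variable {G : Type*} [Groupoid G]

def dom (σ : GArrow G) : G := σ.1

def ran (σ : GArrow G) : G := σ.2.1

@[simp] lemma dom_unit (a : G) : dom (unit a) = a := rfl

@[simp] lemma ran_unit (a : G) : ran (unit a) = a := rfl

@[simp] lemma dom_ginv (σ : GArrow G) : dom (ginv σ) = ran σ := rfl

@[simp] lemma ran_ginv (σ : GArrow G) : ran (ginv σ) = dom σ := rfl

@[simp] lemma ginv_ginv (σ : GArrow G) : ginv (ginv σ) = σ := by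
  obtain ⟨a, b, f⟩ := σ
  simp [ginv]

lemma ginv_injective : Function.Injective (ginv : GArrow G → GArrow G) :=
  Function.LeftInverse.injective ginv_ginv

lemma unit_injective : Function.Injective (unit : G → GArrow G) :=
  fun _ _ h => congrArg Sigma.fst h

lemma comp_ginv_self (σ : GArrow G) (h : Composable σ (ginv σ)) :
    comp σ (ginv σ) h = unit (ran σ) := by
  obtain ⟨a, b, f⟩ := σ
  simp [comp, ginv, unit, ran]

def IsGlobalBisection (S : Set (GArrow G)) : Prop :=
  BijOn dom S univ ∧ BijOn ran S univ

lemma bijOn_preimage_ginv {p q : GArrow G → G} (hpq : ∀ σ, p (ginv σ) = q σ)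
    {S : Set (GArrow G)} (h : BijOn q S univ) : BijOn p (ginv ⁻¹' S) univ := by
  refine ⟨mapsTo_univ _ _, fun a ha b hb hab => ?_, fun e _ => ?_⟩
  · exact ginv_injective (h.injOn ha hb (by simpa only [← hpq, ginv_ginv] using hab))
  · obtain ⟨s, hs, rfl⟩ := h.surjOn (mem_univ e)
    exact ⟨ginv s, by rwa [mem_preimage, ginv_ginv], hpq s⟩

namespace IsGlobalBisection

variable {S : Set (GArrow G)}

lemma preimage_ginv (hS : IsGlobalBisection S) : IsGlobalBisection (ginv ⁻¹' S) :=
  ⟨bijOn_preimage_ginv dom_ginv hS.2, bijOn_preimage_ginv ran_ginv hS.1⟩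

lemma setMul_preimage_ginv (hS : IsGlobalBisection S) :
    setMul S (ginv ⁻¹' S) = GUnits G := by
  ext ρ
  constructor
  · rintro ⟨s, hs, t, ht, hst, rfl⟩
    obtain rfl : t = ginv s := by rw [← hS.1.injOn ht hs hst.symm, ginv_ginv]
    exact ⟨_, (comp_ginv_self s hst).symm⟩
  · rintro ⟨e, rfl⟩
    obtain ⟨s, hs, rfl⟩ := hS.2.surjOn (mem_univ e)
    exact ⟨s, hs, ginv s, by rwa [mem_preimage, ginv_ginv], rfl, (comp_ginv_self s rfl).symm⟩

lemma preimage_ginv_setMul (hS : IsGlobalBisection S) :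
    setMul (ginv ⁻¹' S) S = GUnits G := by
  simpa only [preimage_preimage, ginv_ginv, preimage_id'] using
    hS.preimage_ginv.setMul_preimage_ginv

end IsGlobalBisection

lemma isGlobalBisection_union_image_unit {T : Set (GArrow G)} {X : Set G}
    (hdom : BijOn dom T X) (hran : BijOn ran T X) : IsGlobalBisection (T ∪ unit '' Xᶜ) :=
  ⟨hdom.union_image_compl dom_unit, hran.union_image_compl ran_unit⟩

lemma sigmaSet_of_dom_eq_ran {σ : GArrow G} (h : dom σ = ran σ) :
    SigmaSet σ = {σ} ∪ unit '' {dom σ}ᶜ := by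
  rw [SigmaSet, if_pos (show σ.1 = σ.2.1 from h), GUnits,
    image_compl_eq_range_sdiff_image unit_injective, image_singleton]
  rfl

lemma sigmaSet_of_dom_ne_ran {σ : GArrow G} (h : dom σ ≠ ran σ) :
    SigmaSet σ = {σ, ginv σ} ∪ unit '' {dom σ, ran σ}ᶜ := by
  rw [SigmaSet, if_neg (show σ.1 ≠ σ.2.1 from h), GUnits,
    image_compl_eq_range_sdiff_image unit_injective, image_pair]
  rfl

lemma isGlobalBisection_sigmaSet (σ : GArrow G) : IsGlobalBisection (SigmaSet σ) := by
  by_cases h : dom σ = ran σ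
  · rw [sigmaSet_of_dom_eq_ran h]
    exact isGlobalBisection_union_image_unit (bijOn_singleton.2 rfl) (bijOn_singleton.2 h.symm)
  · rw [sigmaSet_of_dom_ne_ran h]
    refine isGlobalBisection_union_image_unit ?_ ?_
    · exact (bijOn_singleton.2 (dom_ginv σ)).insert h
    · rw [pair_comm (dom σ)]
      exact (bijOn_singleton.2 (ran_ginv σ)).insert (Ne.symm h)

end GArrow

/-- `Σ_σ` is invertible in the monoid `P(G)`. -/
theorem stmt2 {G : Type*} [Groupoid G] (σ : GArrow G) :
    ∃ B : Set (GArrow G), GArrow.setMul (SigmaSet σ) B = GArrow.GUnits G ∧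
      GArrow.setMul B (SigmaSet σ) = GArrow.GUnits G :=
  have hS := GArrow.isGlobalBisection_sigmaSet σ
  ⟨GArrow.ginv ⁻¹' SigmaSet σ, hS.setMul_preimage_ginv, hS.preimage_ginv_setMul⟩
end

section
/- Let R be an object unital G-graded ring, M a graded unital left R-module, σ ∈ G, and m ∈ M_σ. Then the cyclic submodule Rm equals R(σ⁻¹)m, and Rm is a graded unital G-graded submodule of M; that is, for each τ ∈ G, (Rm) ∩ M_τ = R(σ⁻¹)_τ m. -/
open CategoryTheory

/-!
Since `1_{R_{r(σ)}} • m = m`, we have `r • m = (r 1_{R_{r(σ)}}) • m`, and right multiplication by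
`1_{R_{r(σ)}}` maps `R` into `R(σ⁻¹)`; hence `Rm = R(σ⁻¹)m`.

For gradedness, split `r = s + t` with `s ∈ R_{τσ⁻¹}` and `t` a sum of components of other
degrees: `s • m ∈ M_τ` while `t • m` lies in the sum of the `M_δ`, `δ ≠ τ`, so if `r • m ∈ M_τ`
then independence of the `M_δ` forces `t • m = 0`, i.e. `r • m = s • m`.
-/

namespace GArrow

variable {G : Type*} [Groupoid G]

theorem comp_comp_ginv (ρ σ : GArrow G) (h : Composable ρ σ) :
    comp (comp ρ σ h) (ginv σ) rfl = ρ := by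
  obtain ⟨a, b, f⟩ := σ
  obtain ⟨c, d, g⟩ := ρ
  obtain rfl : c = b := h
  simp [comp, ginv]

theorem comp_ginv_comp (σ τ : GArrow G) (h : Composable τ (ginv σ)) :
    comp (comp τ (ginv σ) h) σ rfl = τ := by
  obtain ⟨a, b, f⟩ := σ
  obtain ⟨c, d, g⟩ := τ
  obtain rfl : c = a := h
  have cancel : ∀ p : b = b, f ≫ eqToHom p ≫ inv f ≫ g = g := fun _ => by simp
  simp [comp, ginv]
  exact cancel _

end GArrow

theorem AddMonoidHom.exists_mem_apply_eq_of_iSupIndep {ι κ R M : Type*} [AddCommGroup R]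
    [AddCommGroup M] {A : ι → AddSubgroup R} (hA : ⨆ i, A i = ⊤) {B : κ → AddSubgroup M}
    (hB : iSupIndep B) (f : R →+ M) {k : κ} {S : AddSubgroup R}
    (h : ∀ i, A i ≤ S ⊓ (B k).comap f ∨ A i ≤ (⨆ j, ⨆ (_ : j ≠ k), B j).comap f)
    (r : R) (hr : f r ∈ B k) : ∃ s ∈ S, f s = f r := by
  have hsplit : r ∈ S ⊓ (B k).comap f ⊔ (⨆ j, ⨆ (_ : j ≠ k), B j).comap f := by
    refine (hA ▸ iSup_le fun i => ?_ : (⊤ : AddSubgroup R) ≤ _) trivial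
    rcases h i with hi | hi
    exacts [le_sup_of_le_left hi, le_sup_of_le_right hi]
  obtain ⟨s, ⟨hsS, hsB⟩, t, ht, rfl⟩ := AddSubgroup.mem_sup.mp hsplit
  have htB : f t ∈ B k := by
    simpa [map_add] using sub_mem hr hsB
  have ht0 : f t = 0 := (AddSubgroup.disjoint_def.mp (hB k)) htB ht
  exact ⟨s, hsS, by rw [map_add, ht0, add_zero]⟩

section Graded

variable {G R M : Type*} [Groupoid G] [NonUnitalRing R] [AddCommGroup M] [SMul R M]
  {gr : OUGrading G R}

theorem suspComponent_ginv_comp (gr : OUGrading G R) {ρ σ : GArrow G}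
    (hc : GArrow.Composable ρ σ) :
    suspComponent gr (GArrow.ginv σ) (GArrow.comp ρ σ hc) = gr.component ρ := by
  have hc' : GArrow.Composable (GArrow.comp ρ σ hc) (GArrow.ginv σ) := rfl
  rw [suspComponent, dif_pos hc', GArrow.comp_comp_ginv]

theorem OUGrading.mul_u_mem_suspension (gr : OUGrading G R) (σ : GArrow G) (r : R) :
    r * gr.u σ.2.1 ∈ suspension gr (GArrow.ginv σ) := by
  suffices h : (⊤ : AddSubgroup R) ≤
      (suspension gr (GArrow.ginv σ)).comap (AddMonoidHom.mulRight (gr.u σ.2.1)) from h trivial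
  rw [← gr.sup_eq_top, iSup_le_iff]
  intro ρ r hr
  show r * gr.u σ.2.1 ∈ suspension gr (GArrow.ginv σ)
  by_cases hc : GArrow.Composable ρ σ
  · rw [← hc, gr.u_right ρ r hr]
    refine AddSubgroup.mem_iSup_of_mem (GArrow.comp ρ σ hc) ?_
    rwa [suspComponent_ginv_comp]
  · rw [gr.mul_eq_zero ρ (GArrow.unit σ.2.1) hc r hr _ (gr.u_mem σ.2.1)]
    exact zero_mem _

def GrModule.smulRight (gm : GrModule gr M) (m : M) : R →+ M :=
  AddMonoidHom.mk' (· • m) fun r s => gm.add_smul r s m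

theorem GrModule.zero_smul (gm : GrModule gr M) (m : M) : (0 : R) • m = 0 :=
  map_zero (gm.smulRight m)

theorem GrModule.smul_mem_of_mem_suspComponent (gm : GrModule gr M) {σ τ : GArrow G} {m : M}
    (hm : m ∈ gm.component σ) {r : R} (hr : r ∈ suspComponent gr (GArrow.ginv σ) τ) :
    r • m ∈ gm.component τ := by
  rw [suspComponent] at hr
  split_ifs at hr with hc
  · simpa only [GArrow.comp_ginv_comp] using
      gm.smul_mem (GArrow.comp τ (GArrow.ginv σ) hc) σ rfl r hr m hm
  · rw [AddSubgroup.mem_bot.mp hr]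
    exact gm.zero_smul m ▸ zero_mem _

theorem GrModule.component_le_suspComponent_or_comap_iSup_ne (gm : GrModule gr M) {σ : GArrow G} {m : M}
    (hm : m ∈ gm.component σ) (τ ρ : GArrow G) :
    gr.component ρ ≤ suspComponent gr (GArrow.ginv σ) τ ⊓ (gm.component τ).comap (gm.smulRight m) ∨
      gr.component ρ ≤ (⨆ δ, ⨆ (_ : δ ≠ τ), gm.component δ).comap (gm.smulRight m) := by
  by_cases hc : GArrow.Composable ρ σ
  · by_cases hτ : GArrow.comp ρ σ hc = τ
    · subst hτ
      refine Or.inl (le_inf ?_ fun r hr => gm.smul_mem ρ σ hc r hr m hm)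
      rw [suspComponent_ginv_comp]
    · exact Or.inr fun r hr => AddSubgroup.mem_iSup_of_mem (GArrow.comp ρ σ hc) <|
        AddSubgroup.mem_iSup_of_mem hτ (gm.smul_mem ρ σ hc r hr m hm)
  · refine Or.inr fun r hr => ?_
    show r • m ∈ ⨆ δ, ⨆ (_ : δ ≠ τ), gm.component δ
    rw [gm.smul_eq_zero ρ σ hc r hr m hm]
    exact zero_mem _

end Graded

/-- For homogeneous `m ∈ M_σ`, the cyclic submodule `Rm` equals
`R(σ⁻¹)m`, and it is graded: `(Rm) ∩ M_τ = R(σ⁻¹)_τ m` for every `τ`. -/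
theorem stmt7 {G R M : Type*} [Groupoid G] [NonUnitalRing R] [AddCommGroup M] [SMul R M]
    (gr : OUGrading G R) (gm : GrModule gr M) (hu : gm.IsUnital)
    (σ : GArrow G) (m : M) (hm : m ∈ gm.component σ) :
    ({x : M | ∃ r : R, x = r • m} =
      {x : M | ∃ r ∈ suspension gr (GArrow.ginv σ), x = r • m}) ∧
    (∀ τ : GArrow G,
      {x : M | ∃ r : R, x = r • m} ∩ (gm.component τ : Set M) =
        {x : M | ∃ r ∈ suspComponent gr (GArrow.ginv σ) τ, x = r • m}) := by
  refine ⟨Set.ext fun x => ⟨?_, ?_⟩, fun τ => Set.ext fun x => ⟨?_, ?_⟩⟩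
  · rintro ⟨r, rfl⟩
    exact ⟨r * gr.u σ.2.1, gr.mul_u_mem_suspension σ r, by rw [gm.mul_smul, hu σ m hm]⟩
  · rintro ⟨r, -, rfl⟩
    exact ⟨r, rfl⟩
  · rintro ⟨⟨r, rfl⟩, hr⟩
    obtain ⟨s, hs, hsr⟩ := (gm.smulRight m).exists_mem_apply_eq_of_iSupIndep gr.sup_eq_top
      gm.indep (gm.component_le_suspComponent_or_comap_iSup_ne hm τ) r hr
    exact ⟨s, hs, hsr.symm⟩
  · rintro ⟨r, hr, rfl⟩
    exact ⟨⟨r, rfl⟩, gm.smul_mem_of_mem_suspComponent hm hr⟩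
end

section
/- Let R be an object unital G-graded ring and M a nonzero finitely generated graded unital left R-module. Then M contains a maximal proper graded submodule. -/
open CategoryTheory

/-- A nonzero finitely generated graded unital module contains a
maximal proper graded submodule. -/
theorem stmt8 {G R M : Type*} [Groupoid G] [NonUnitalRing R] [AddCommGroup M] [SMul R M]
    (gr : OUGrading G R) (gm : GrModule gr M) (hu : gm.IsUnital) [Nontrivial M]
    (hfg : ∃ s : Finset M,
      AddSubgroup.closure ((s : Set M) ∪ {x : M | ∃ (r : R), ∃ m ∈ s, x = r • m}) = ⊤) :
    ∃ N : AddSubgroup M, IsGrSubmodule gm N ∧ N ≠ ⊤ ∧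
      ∀ N' : AddSubgroup M, IsGrSubmodule gm N' → N' ≠ ⊤ → N ≤ N' → N' = N := by
  classical
  have h0 : ∀ r : R, r • (0 : M) = 0 := by
    intro r
    have h := gm.smul_add r 0 0
    rw [add_zero] at h
    exact (left_eq_add.mp h)
  set S : Set (AddSubgroup M) := {N | IsGrSubmodule gm N ∧ N ≠ ⊤} with hS
  have hbot : (⊥ : AddSubgroup M) ∈ S := by
    refine ⟨⟨?_, ?_⟩, ?_⟩
    · intro r m hm
      simp only [AddSubgroup.mem_bot] at hm ⊢
      rw [hm, h0]
    · exact le_antisymm bot_le (iSup_le fun σ => inf_le_left)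
    · intro h
      obtain ⟨x, hx⟩ := exists_ne (0 : M)
      exact hx ((AddSubgroup.mem_bot).mp (h ▸ AddSubgroup.mem_top x))
  have hchain : ∀ c ⊆ S, IsChain (· ≤ ·) c → ∀ y ∈ c, ∃ ub ∈ S, ∀ z ∈ c, z ≤ ub := by
    intro c hcs hc y hy
    have hdir : DirectedOn (· ≤ ·) c := hc.directedOn
    have hne : c.Nonempty := ⟨y, hy⟩
    have hmem : ∀ x : M, x ∈ sSup c ↔ ∃ N ∈ c, x ∈ N := fun x =>
      AddSubgroup.mem_sSup_of_directedOn hne hdir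
    have hsmul : ∀ (r : R), ∀ x ∈ sSup c, r • x ∈ sSup c := by
      intro r x hx
      obtain ⟨N, hN, hxN⟩ := (hmem x).mp hx
      exact (hmem _).mpr ⟨N, hN, (hcs hN).1.1 r x hxN⟩
    refine ⟨sSup c, ⟨⟨hsmul, ?_⟩, ?_⟩, fun z hz => le_sSup hz⟩
    · refine le_antisymm (sSup_le fun N hN => ?_) (iSup_le fun σ => inf_le_left)
      calc N = ⨆ σ : GArrow G, (N ⊓ gm.component σ) := (hcs hN).1.2
        _ ≤ ⨆ σ : GArrow G, (sSup c ⊓ gm.component σ) :=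
          iSup_mono fun σ => inf_le_inf_right _ (le_sSup hN)
    · intro htop
      obtain ⟨s, hs⟩ := hfg
      have key : ∀ t : Finset M, ∃ N ∈ c, ∀ x ∈ t, x ∈ N := by
        intro t
        induction t using Finset.induction_on with
        | empty => exact ⟨y, hy, by simp⟩
        | @insert a t ha ih =>
          obtain ⟨N, hN, hNall⟩ := ih
          have haS : a ∈ sSup c := htop ▸ AddSubgroup.mem_top a
          obtain ⟨N', hN', haN'⟩ := (hmem a).mp haS
          obtain ⟨N'', hN'', hle1, hle2⟩ := hdir N hN N' hN'
          refine ⟨N'', hN'', fun x hx => ?_⟩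
          rcases Finset.mem_insert.mp hx with h | h
          · exact hle2 (h ▸ haN')
          · exact hle1 (hNall x h)
      obtain ⟨N, hN, hNall⟩ := key s
      have hsub : ((s : Set M) ∪ {x : M | ∃ (r : R), ∃ m ∈ s, x = r • m}) ⊆ N := by
        rintro x (hx | ⟨r, m', hm', rfl⟩)
        · exact hNall x hx
        · exact (hcs hN).1.1 r m' (hNall m' hm')
      have : (⊤ : AddSubgroup M) ≤ N := hs ▸ AddSubgroup.closure_le N |>.mpr hsub
      exact (hcs hN).2 (le_antisymm le_top this)
  obtain ⟨m, -, hm⟩ := zorn_le_nonempty₀ S hchain ⊥ hbot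
  exact ⟨m, hm.prop.1, hm.prop.2, fun N' hg hne hle =>
    le_antisymm (hm.2 ⟨hg, hne⟩ hle) hle⟩
end

section
/- Let R be an object unital G-graded ring and M a graded unital left R-module. Then the map η : M → R·HOM_R(R,M) sending m to the homomorphism η_m(x) = x m is an isomorphism of graded unital left R-modules, where the left R-action on HOM_R(R,M) is given by (r·f)(x) = f(xr). -/
open CategoryTheory

/-- The map `η : M → R·HOM_R(R,M)`, `η(m)(x) = x • m`, is an
isomorphism of graded unital left `R`-modules (additive, `R`-linear for the action
`(r·f)(x) = f(xr)`, degree preserving, and bijective onto `R·HOM_R(R,M)`). -/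
theorem stmt9 {G R M : Type*} [Groupoid G] [NonUnitalRing R] [AddCommGroup M] [SMul R M]
    (gr : OUGrading G R) (gm : GrModule gr M) (hu : gm.IsUnital) :
    (∀ m : M, (fun x : R => x • m) ∈ RHOM gr gm.component) ∧
    (∀ m n : M, (fun x : R => x • (m + n)) = (fun x : R => x • m) + fun x : R => x • n) ∧
    (∀ (r : R) (m : M), (fun x : R => x • (r • m)) = rAct r fun x : R => x • m) ∧
    (∀ σ : GArrow G, ∀ m ∈ gm.component σ,
      (fun x : R => x • m) ∈ HomDeg gr gm.component σ) ∧
    Function.Injective (fun (m : M) (x : R) => x • m) ∧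
    (∀ f ∈ RHOM gr gm.component, ∃ m : M, f = fun x : R => x • m) := by
  classical
  -- left multiplication as an additive hom
  let L : R → (M →+ M) := fun r => AddMonoidHom.mk' (fun m => r • m) (gm.smul_add r)
  have smul0 : ∀ r : R, r • (0 : M) = 0 := fun r => (L r).map_zero
  -- η as an additive hom
  let η : M →+ (R → M) := AddMonoidHom.mk' (fun m => (fun x : R => x • m))
    (fun m n => funext fun x => gm.smul_add x m n)
  have hηdef : ∀ m : M, η m = fun x : R => x • m := fun m => rfl
  -- key decomposition: every element is a finite sum of unital pieces
  have key : ∀ d : M, ∃ s : Finset G,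
      (∀ e ∉ s, gr.u e • d = 0) ∧ d = ∑ e ∈ s, gr.u e • d := by
    let P : AddSubgroup M :=
      { carrier := {d | ∃ s : Finset G,
          (∀ e ∉ s, gr.u e • d = 0) ∧ d = ∑ e ∈ s, gr.u e • d}
        zero_mem' := ⟨∅, fun e _ => smul0 _, by simp⟩
        add_mem' := by
          rintro a b ⟨s, hs0, hs⟩ ⟨t, ht0, ht⟩
          refine ⟨s ∪ t, fun e he => ?_, ?_⟩
          · have hes : e ∉ s := fun h => he (Finset.mem_union_left _ h)
            have het : e ∉ t := fun h => he (Finset.mem_union_right _ h)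
            rw [gm.smul_add, hs0 e hes, ht0 e het, add_zero]
          · have h1 : ∑ e ∈ s ∪ t, gr.u e • a = a := by
              rw [← Finset.sum_subset Finset.subset_union_left
                (fun e _ he => hs0 e he), ← hs]
            have h2 : ∑ e ∈ s ∪ t, gr.u e • b = b := by
              rw [← Finset.sum_subset Finset.subset_union_right
                (fun e _ he => ht0 e he), ← ht]
            calc a + b = ∑ e ∈ s ∪ t, gr.u e • a + ∑ e ∈ s ∪ t, gr.u e • b := by
                  rw [h1, h2]
              _ = ∑ e ∈ s ∪ t, (gr.u e • a + gr.u e • b) := by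
                  rw [Finset.sum_add_distrib]
              _ = ∑ e ∈ s ∪ t, gr.u e • (a + b) := by
                  exact Finset.sum_congr rfl fun e _ => (gm.smul_add _ a b).symm
        neg_mem' := by
          rintro a ⟨s, hs0, hs⟩
          refine ⟨s, fun e he => ?_, ?_⟩
          · have : gr.u e • (-a) = -(gr.u e • a) := (L (gr.u e)).map_neg a
            rw [this, hs0 e he, neg_zero]
          · calc -a = -(∑ e ∈ s, gr.u e • a) := by rw [← hs]
              _ = ∑ e ∈ s, -(gr.u e • a) := by rw [Finset.sum_neg_distrib]
              _ = ∑ e ∈ s, gr.u e • (-a) :=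
                  Finset.sum_congr rfl fun e _ => ((L (gr.u e)).map_neg a).symm }
    have hcomp : ∀ σ : GArrow G, gm.component σ ≤ P := by
      intro σ d hd
      refine ⟨{σ.2.1}, fun e he => ?_, ?_⟩
      · have hne : e ≠ σ.2.1 := by simpa using he
        exact gm.smul_eq_zero (GArrow.unit e) σ hne (gr.u e) (gr.u_mem e) d hd
      · rw [Finset.sum_singleton, hu σ d hd]
    have hle : (⨆ σ : GArrow G, gm.component σ) ≤ P := iSup_le hcomp
    intro d
    exact hle (by rw [gm.sup_eq_top]; trivial)
  -- part 4 : homogeneous elements give homogeneous homs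
  have part4 : ∀ σ : GArrow G, ∀ m ∈ gm.component σ,
      (fun x : R => x • m) ∈ HomDeg gr gm.component σ := by
    intro σ m hm
    exact ⟨fun x y => gm.add_smul x y m, fun r x => gm.mul_smul r x m,
      fun τ h x hx => gm.smul_mem τ σ h x hx m hm,
      fun τ hnc x hx => gm.smul_eq_zero τ σ hnc x hx m hm⟩
  -- η m ∈ HOM for every m
  have hHOM : ∀ m : M, (fun x : R => x • m) ∈ HOM gr gm.component := by
    intro m
    have hle : (⨆ σ : GArrow G, gm.component σ) ≤
        (HOM gr gm.component).comap η := by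
      refine iSup_le fun σ n hn => ?_
      exact AddSubgroup.subset_closure (Set.mem_iUnion.mpr ⟨σ, part4 σ n hn⟩)
    exact hle (by rw [gm.sup_eq_top]; trivial)
  -- part 1 : η m ∈ RHOM
  have part1 : ∀ m : M, (fun x : R => x • m) ∈ RHOM gr gm.component := by
    intro m
    have hle : (⨆ σ : GArrow G, gm.component σ) ≤
        (RHOM gr gm.component).comap η := by
      refine iSup_le fun σ n hn => ?_
      refine AddSubgroup.subset_closure ⟨gr.u σ.2.1, (fun x : R => x • n), hHOM n, ?_⟩
      funext x
      show x • n = (x * gr.u σ.2.1) • n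
      rw [gm.mul_smul, hu σ n hn]
    exact hle (by rw [gm.sup_eq_top]; trivial)
  -- linearity of every element of HOM
  have hlin : ∀ f ∈ HOM gr gm.component, ∀ r x : R, f (r * x) = r • f x := by
    intro f hf
    refine AddSubgroup.closure_induction
      (fun g hg => ?_) (fun r x => ?_) (fun g h _ _ hg hh r x => ?_)
      (fun g _ hg r x => ?_) hf
    · obtain ⟨σ, hσ⟩ := Set.mem_iUnion.mp hg
      exact hσ.2.1
    · show (0 : M) = r • (0 : M)
      rw [smul0]
    · show g (r * x) + h (r * x) = r • (g x + h x)
      rw [hg r x, hh r x, gm.smul_add]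
    · show -(g (r * x)) = r • (-(g x))
      rw [hg r x]
      exact ((L r).map_neg (g x)).symm
  -- surjectivity onto RHOM
  have part6 : ∀ f ∈ RHOM gr gm.component, ∃ m : M, f = fun x : R => x • m := by
    have hle : RHOM gr gm.component ≤ η.range := by
      rw [RHOM, AddSubgroup.closure_le]
      rintro g ⟨r, f, hf, rfl⟩
      refine ⟨f r, ?_⟩
      funext x
      show x • f r = f (x * r)
      rw [hlin f hf x r]
    intro f hf
    obtain ⟨m, hm⟩ := hle hf
    exact ⟨m, hm.symm⟩
  -- injectivity
  have part5 : Function.Injective (fun (m : M) (x : R) => x • m) := by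
    intro m n h
    have hx : ∀ x : R, x • (m - n) = 0 := by
      intro x
      have h1 : x • m = x • n := congrFun h x
      have h2 : x • (m - n) + x • n = x • m := by
        rw [← gm.smul_add, sub_add_cancel]
      rw [h1] at h2
      exact add_right_cancel (h2.trans (zero_add (x • n)).symm)
    obtain ⟨s, _, hsum⟩ := key (m - n)
    have : m - n = 0 := by
      rw [hsum]
      exact Finset.sum_eq_zero fun e _ => hx (gr.u e)
    exact sub_eq_zero.mp this
  refine ⟨part1, ?_, ?_, part4, part5, part6⟩
  · intro m n
    funext x
    exact gm.smul_add x m n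
  · intro r m
    funext x
    exact (gm.mul_smul x r m).symm
end

section
/- Let R be an object unital G-graded ring. The map η : R → R·END_R(R) defined by η(r)(x) = x r is an isomorphism of (R,R)-bimodules, where END_R(R) = HOM_R(R,R) carries the left R-action (r·f)(x) = f(xr) and the right R-action (f·r)(x) = f(x)r. -/
open CategoryTheory

/-
The map `η(r) = (x ↦ x r)` is additive and commutes with both actions by associativity, so
everything is about its image. The ring `R` has left local units: every element is a finite sum
of homogeneous ones, and a finite sum of the `1_{R_e}` fixes each of them from the left. Hence
`x r = x s` for all `x` forces `r = s`. A homogeneous `t ∈ R_σ` satisfies `t = t 1_{d(σ)}`, so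
`η(t) = t · η(1_{d(σ)})` with `η(1_{d(σ)})` graded of unit degree; thus `η(R) ⊆ R·END_R(R)`.
Conversely, a generator `r · f` of `R·END_R(R)` is `x ↦ f(x r) = x f(r)`, i.e. `η(f r)`.
-/

def rightMulAddHom (R : Type*) [NonUnitalRing R] : R →+ (R → R) where
  toFun r x := x * r
  map_zero' := funext mul_zero
  map_add' r s := funext fun x => mul_add x r s

theorem injective_mul_right_of_forall_exists_mul_eq_self {R : Type*} [NonUnitalRing R]
    (h : ∀ t : R, ∃ e : R, e * t = t) : Function.Injective fun (r : R) (x : R) => x * r := by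
  intro r s hrs
  obtain ⟨e, he⟩ := h (r - s)
  rw [← sub_eq_zero, ← he, mul_sub, sub_eq_zero]
  exact congrFun hrs e

namespace OUGrading

variable {G R : Type*} [Groupoid G] [NonUnitalRing R] (gr : OUGrading G R)

@[elab_as_elim]
theorem iSup_induction {motive : R → Prop} (t : R)
    (mem : ∀ σ, ∀ x ∈ gr.component σ, motive x) (zero : motive 0)
    (add : ∀ x y, motive x → motive y → motive (x + y)) : motive t :=
  AddSubgroup.iSup_induction gr.component (C := motive)
    (by rw [gr.sup_eq_top]; exact AddSubgroup.mem_top t) mem zero add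

theorem exists_finset_sum_u_mul_eq_self (t : R) :
    ∃ A : Finset G, ∀ B : Finset G, A ⊆ B → (∑ a ∈ B, gr.u a) * t = t := by
  classical
  induction t using gr.iSup_induction with
  | mem σ x hx =>
    refine ⟨{σ.2.1}, fun B hB => ?_⟩
    have hu_mul (a : G) (ha : a ≠ σ.2.1) : gr.u a * x = 0 :=
      gr.mul_eq_zero (GArrow.unit a) σ ha _ (gr.u_mem a) x hx
    rw [Finset.sum_mul, Finset.sum_eq_single_of_mem _ (Finset.singleton_subset_iff.1 hB)
      fun a _ => hu_mul a, gr.u_left σ x hx]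
  | zero => exact ⟨∅, fun B _ => mul_zero _⟩
  | add x y hx hy =>
    obtain ⟨A, hA⟩ := hx
    obtain ⟨A', hA'⟩ := hy
    refine ⟨A ∪ A', fun B hB => ?_⟩
    rw [mul_add, hA B (Finset.union_subset_left hB), hA' B (Finset.union_subset_right hB)]

theorem exists_mul_eq_self (gr : OUGrading G R) (t : R) : ∃ e : R, e * t = t :=
  let ⟨A, hA⟩ := gr.exists_finset_sum_u_mul_eq_self t
  ⟨_, hA A subset_rfl⟩

theorem mul_u_mem_homDeg (a : G) :
    rightMulAddHom R (gr.u a) ∈ HomDeg gr gr.component (GArrow.unit a) := by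
  refine ⟨fun x y => add_mul x y _, fun r x => mul_assoc r x _, ?_, ?_⟩
  · rintro ⟨b, c, f⟩ (rfl : b = a) x hx
    have hcomp : GArrow.comp ⟨b, c, f⟩ (GArrow.unit b) rfl = ⟨b, c, f⟩ := by
      simp [GArrow.comp, GArrow.unit]
    change x * gr.u b ∈ _
    rwa [hcomp, gr.u_right _ x hx]
  · exact fun τ h x hx => gr.mul_eq_zero τ _ h x hx _ (gr.u_mem a)

theorem map_mul_of_mem_HOM {cN : GArrow G → AddSubgroup R} {f : R → R}
    (hf : f ∈ HOM gr cN) (r x : R) : f (r * x) = r * f x := by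
  induction hf using AddSubgroup.closure_induction with
  | mem g hg =>
    obtain ⟨σ, hgσ⟩ := Set.mem_iUnion.1 hg
    exact hgσ.2.1 r x
  | zero => exact (mul_zero r).symm
  | add g g' _ _ hg hg' => simp only [Pi.add_apply, hg, hg', mul_add]
  | neg g _ hg => simp only [Pi.neg_apply, hg, mul_neg]

theorem rightMulAddHom_mem_RHOM (r : R) : rightMulAddHom R r ∈ RHOM gr gr.component := by
  induction r using gr.iSup_induction with
  | mem σ t ht =>
    have hηt : rightMulAddHom R t = rAct t (rightMulAddHom R (gr.u σ.1)) :=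
      funext fun x => by
        change x * t = x * t * gr.u σ.1
        rw [mul_assoc, gr.u_right σ t ht]
    rw [hηt]
    exact AddSubgroup.subset_closure
      ⟨t, _, AddSubgroup.subset_closure (Set.mem_iUnion.2 ⟨_, gr.mul_u_mem_homDeg σ.1⟩), rfl⟩
  | zero => rw [map_zero]; exact zero_mem _
  | add x y hx hy => rw [map_add]; exact add_mem hx hy

theorem RHOM_le_range_rightMulAddHom (cN : GArrow G → AddSubgroup R) :
    RHOM gr cN ≤ (rightMulAddHom R).range := by
  refine (AddSubgroup.closure_le _).2 ?_
  rintro _ ⟨r, f, hf, rfl⟩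
  exact ⟨f r, funext fun x => (gr.map_mul_of_mem_HOM hf x r).symm⟩

end OUGrading

/-- The map `η : R → R·END_R(R)`, `η(r)(x) = x r`, is an isomorphism
of `(R,R)`-bimodules, for the left action `(s·f)(x) = f(xs)` and the right action
`(f·s)(x) = f(x)s` on `END_R(R) = HOM_R(R,R)`. -/
theorem stmt10 {G R : Type*} [Groupoid G] [NonUnitalRing R] (gr : OUGrading G R) :
    (∀ r : R, (fun x : R => x * r) ∈ RHOM gr gr.component) ∧
    (∀ r s : R, (fun x : R => x * (r + s)) = (fun x : R => x * r) + fun x : R => x * s) ∧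
    (∀ r s : R, (fun x : R => x * (s * r)) = rAct s fun x : R => x * r) ∧
    (∀ r s : R, (fun x : R => x * (r * s)) = fun x : R => x * r * s) ∧
    Function.Injective (fun (r : R) (x : R) => x * r) ∧
    (∀ f ∈ RHOM gr gr.component, ∃ r : R, f = fun x : R => x * r) := by
  refine ⟨gr.rightMulAddHom_mem_RHOM, fun r s => funext fun x => mul_add x r s,
    fun r s => funext fun x => (mul_assoc x s r).symm,
    fun r s => funext fun x => (mul_assoc x r s).symm,
    injective_mul_right_of_forall_exists_mul_eq_self gr.exists_mul_eq_self, fun f hf => ?_⟩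
  obtain ⟨r, hr⟩ := gr.RHOM_le_range_rightMulAddHom gr.component hf
  exact ⟨r, hr.symm⟩
end

section
/- Let R be an object unital G-graded ring and let M, N, P be graded left R-modules with R-linear maps f : M → P, g : N → P, h : M → N such that f = g ∘ h. If f and g are graded maps, then there exists a graded map h' : M → N with f = g ∘ h'; if f and h are graded maps, then there exists a graded map g' : N → P with f = g' ∘ h. -/
open CategoryTheory

/-!
Every `R`-linear map `k` between graded modules has a degree-preserving part `k₀`, which is again
`R`-linear, because `(r • a)_{ρσ} = r • a_σ` for `r ∈ R_ρ` (left cancellation in the groupoid).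
Moreover `k₀ = k` when `k` is graded, and `(k₁ ∘ k₂)₀` is `k₁ ∘ k₂₀` when `k₁` is graded and
`k₁₀ ∘ k₂` when `k₂` is graded. As `f = g ∘ h` is graded, `f = f₀` is `g ∘ h₀` in the first
case and `g₀ ∘ h` in the second.
-/

theorem DirectSum.isInternal_addSubgroup_of_iSupIndep_of_iSup_eq_top {ι M : Type*}
    [DecidableEq ι] [AddCommGroup M] {A : ι → AddSubgroup M} (hind : iSupIndep A)
    (htop : ⨆ i, A i = ⊤) : DirectSum.IsInternal A := by
  have h : DirectSum.IsInternal fun i => (A i).toIntSubmodule := by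
    rw [DirectSum.isInternal_submodule_iff_iSupIndep_and_iSup_eq_top]
    refine ⟨hind.map_orderIso AddSubgroup.toIntSubmodule, ?_⟩
    rw [← OrderIso.map_iSup, htop]
    rfl
  exact h

theorem GArrow.comp_left_cancel {G : Type*} [Groupoid G] {ρ τ σ : GArrow G}
    (h₁ : GArrow.Composable ρ τ) (h₂ : GArrow.Composable ρ σ)
    (he : GArrow.comp ρ τ h₁ = GArrow.comp ρ σ h₂) : τ = σ := by
  obtain ⟨a, b, φ⟩ := ρ
  obtain ⟨c, d, ψ⟩ := τ
  obtain ⟨e, k, χ⟩ := σ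
  obtain rfl : a = d := h₁
  obtain rfl : a = k := h₂
  simp only [GArrow.comp] at he
  obtain ⟨rfl, he₂⟩ := Sigma.mk.inj_iff.mp he
  obtain ⟨-, he₃⟩ := Sigma.mk.inj_iff.mp (eq_of_heq he₂)
  have hψχ := eq_of_heq he₃
  simp only [eqToHom_refl, Category.id_comp, cancel_mono] at hψχ
  rw [hψχ]

namespace DirectSum

variable {ι A B C : Type*} [DecidableEq ι] [AddCommGroup A] [AddCommGroup B] [AddCommGroup C]
  {𝒜 : ι → AddSubgroup A} {ℬ : ι → AddSubgroup B} {𝒞 : ι → AddSubgroup C}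
  [Decomposition 𝒜] [Decomposition ℬ] [Decomposition 𝒞]

theorem Decomposition.addMonoidHom_ext {k l : A →+ B}
    (h : ∀ i, ∀ a ∈ 𝒜 i, k a = l a) : k = l := by
  ext a
  induction a using Decomposition.inductionOn 𝒜 with
  | zero => simp
  | homogeneous a => exact h _ a a.2
  | add a a' ha ha' => rw [map_add, map_add, ha, ha']

variable (𝒜 ℬ) in
/-- The degree-preserving part `a ↦ ∑ᵢ (k aᵢ)ᵢ` of an additive map between graded groups. -/
noncomputable def degreePart (k : A →+ B) : A →+ B :=
  (toAddMonoid fun i => (ℬ i).subtype.comp ((DFinsupp.evalAddMonoidHom i).comp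
      ((decomposeAddEquiv ℬ).toAddMonoidHom.comp (k.comp (𝒜 i).subtype)))).comp
    (decomposeAddEquiv 𝒜).toAddMonoidHom

theorem degreePart_apply_of_mem (k : A →+ B) {i : ι} {a : A} (ha : a ∈ 𝒜 i) :
    degreePart 𝒜 ℬ k a = decompose ℬ (k a) i := by
  simp only [degreePart, AddMonoidHom.comp_apply, AddEquiv.coe_toAddMonoidHom,
    decomposeAddEquiv_apply, decompose_of_mem 𝒜 ha, toAddMonoid_of]
  rfl

theorem degreePart_mem (k : A →+ B) {i : ι} {a : A} (ha : a ∈ 𝒜 i) :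
    degreePart 𝒜 ℬ k a ∈ ℬ i := by
  rw [degreePart_apply_of_mem k ha]
  exact SetLike.coe_mem _

theorem decompose_map_of_graded {k : A →+ B} (hk : ∀ i, ∀ a ∈ 𝒜 i, k a ∈ ℬ i) (i : ι) (a : A) :
    (decompose ℬ (k a) i : B) = k (decompose 𝒜 a i) := by
  induction a using Decomposition.inductionOn 𝒜 with
  | zero => simp
  | @homogeneous j a =>
    obtain rfl | hji := eq_or_ne j i
    · rw [decompose_of_mem_same ℬ (hk j a a.2), decompose_of_mem_same 𝒜 a.2]
    · rw [decompose_of_mem_ne ℬ (hk j a a.2) hji, decompose_of_mem_ne 𝒜 a.2 hji, map_zero]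
  | add a a' ha ha' =>
    rw [map_add, decompose_add, decompose_add, add_apply, add_apply, AddSubgroup.coe_add,
      AddSubgroup.coe_add, ha, ha', map_add]

theorem degreePart_eq_self {k : A →+ B} (hk : ∀ i, ∀ a ∈ 𝒜 i, k a ∈ ℬ i) :
    degreePart 𝒜 ℬ k = k :=
  Decomposition.addMonoidHom_ext fun i a ha => by
    rw [degreePart_apply_of_mem k ha, decompose_of_mem_same ℬ (hk i a ha)]

theorem degreePart_comp_of_graded_left {k₁ : B →+ C} (k₂ : A →+ B)
    (hk₁ : ∀ i, ∀ b ∈ ℬ i, k₁ b ∈ 𝒞 i) :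
    degreePart 𝒜 𝒞 (k₁.comp k₂) = k₁.comp (degreePart 𝒜 ℬ k₂) :=
  Decomposition.addMonoidHom_ext fun i a ha => by
    rw [AddMonoidHom.comp_apply, degreePart_apply_of_mem _ ha, degreePart_apply_of_mem _ ha,
      AddMonoidHom.comp_apply, decompose_map_of_graded hk₁]

theorem degreePart_comp_of_graded_right (k₁ : B →+ C) {k₂ : A →+ B}
    (hk₂ : ∀ i, ∀ a ∈ 𝒜 i, k₂ a ∈ ℬ i) :
    degreePart 𝒜 𝒞 (k₁.comp k₂) = (degreePart ℬ 𝒞 k₁).comp k₂ :=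
  Decomposition.addMonoidHom_ext fun i a ha => by
    rw [AddMonoidHom.comp_apply, degreePart_apply_of_mem _ ha, AddMonoidHom.comp_apply,
      degreePart_apply_of_mem _ (hk₂ i a ha)]

end DirectSum

theorem OUGrading.isInternal {G R : Type*} [Groupoid G] [NonUnitalRing R]
    [DecidableEq (GArrow G)] (gr : OUGrading G R) : DirectSum.IsInternal gr.component :=
  DirectSum.isInternal_addSubgroup_of_iSupIndep_of_iSup_eq_top gr.indep gr.sup_eq_top

namespace GrModule

open DirectSum

variable {G R A B : Type*} [Groupoid G] [NonUnitalRing R] {gr : OUGrading G R}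
  [AddCommGroup A] [SMul R A] [AddCommGroup B] [SMul R B]

theorem isInternal [DecidableEq (GArrow G)] (gm : GrModule gr A) : IsInternal gm.component :=
  isInternal_addSubgroup_of_iSupIndep_of_iSup_eq_top gm.indep gm.sup_eq_top

protected theorem smul_zero (gm : GrModule gr A) (r : R) : r • (0 : A) = 0 := by
  simpa using gm.smul_add r 0 0

protected theorem zero_smul_s12 (gm : GrModule gr A) (a : A) : (0 : R) • a = 0 := by
  simpa using gm.add_smul 0 0 a

theorem decompose_smul_of_mem [DecidableEq (GArrow G)] (gm : GrModule gr A)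
    [Decomposition gm.component] {ρ σ : GArrow G} {r : R} (hr : r ∈ gr.component ρ)
    (hc : GArrow.Composable ρ σ) (a : A) :
    (decompose gm.component (r • a) (GArrow.comp ρ σ hc) : A) =
      r • (decompose gm.component a σ : A) := by
  induction a using Decomposition.inductionOn gm.component with
  | zero => simp [gm.smul_zero]
  | @homogeneous τ a =>
    obtain rfl | hτσ := eq_or_ne τ σ
    · rw [decompose_of_mem_same _ a.2, decompose_of_mem_same _ (gm.smul_mem ρ τ hc r hr a a.2)]
    · rw [decompose_of_mem_ne _ a.2 hτσ, gm.smul_zero]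
      by_cases hcτ : GArrow.Composable ρ τ
      · exact decompose_of_mem_ne _ (gm.smul_mem ρ τ hcτ r hr a a.2)
          fun he => hτσ (GArrow.comp_left_cancel hcτ hc he)
      · simp [gm.smul_eq_zero ρ τ hcτ r hr a a.2]
  | add a a' ha ha' =>
    rw [gm.smul_add, decompose_add, DirectSum.add_apply, AddSubgroup.coe_add, ha, ha',
      decompose_add, DirectSum.add_apply, AddSubgroup.coe_add, gm.smul_add]

theorem map_smul_of_homogeneous [DecidableEq (GArrow G)] [Decomposition gr.component]
    (gmA : GrModule gr A) (gmB : GrModule gr B) [Decomposition gmA.component] {k : A →+ B}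
    (hk : ∀ σ, ∀ a ∈ gmA.component σ, k a ∈ gmB.component σ)
    (hsmul : ∀ ρ σ, GArrow.Composable ρ σ → ∀ r ∈ gr.component ρ, ∀ a ∈ gmA.component σ,
      k (r • a) = r • k a)
    (r : R) (a : A) : k (r • a) = r • k a := by
  induction a using Decomposition.inductionOn gmA.component generalizing r with
  | zero => rw [gmA.smul_zero, map_zero, gmB.smul_zero]
  | @homogeneous σ a =>
    induction r using Decomposition.inductionOn gr.component with
    | zero => rw [gmA.zero_smul_s12, map_zero, gmB.zero_smul_s12]
    | @homogeneous ρ r =>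
      by_cases hc : GArrow.Composable ρ σ
      · exact hsmul ρ σ hc r r.2 a a.2
      · rw [gmA.smul_eq_zero ρ σ hc r r.2 a a.2, map_zero,
          gmB.smul_eq_zero ρ σ hc r r.2 (k a) (hk σ a a.2)]
    | add r r' hr hr' => rw [gmA.add_smul, map_add, hr, hr', gmB.add_smul]
  | add a a' ha ha' => rw [gmA.smul_add, map_add, ha, ha', map_add, gmB.smul_add]

theorem isGrHom_degreePart [DecidableEq (GArrow G)] [Decomposition gr.component]
    (gmA : GrModule gr A) (gmB : GrModule gr B) [Decomposition gmA.component]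
    [Decomposition gmB.component] (k : A →+ B) (hk : ∀ (r : R) (a : A), k (r • a) = r • k a) :
    IsGrHom (R := R) gmA.component gmB.component (degreePart gmA.component gmB.component k) := by
  refine ⟨map_add _, map_smul_of_homogeneous gmA gmB (fun σ a ha => degreePart_mem k ha) ?_,
    fun σ a ha => degreePart_mem k ha⟩
  intro ρ σ hc r hr a ha
  rw [degreePart_apply_of_mem k (gmA.smul_mem ρ σ hc r hr a ha), degreePart_apply_of_mem k ha,
    hk, gmB.decompose_smul_of_mem hr hc]

end GrModule

theorem stmt12_general {G R M N P : Type*} [Groupoid G] [NonUnitalRing R]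
    [AddCommGroup M] [AddCommGroup N] [AddCommGroup P] [SMul R M] [SMul R N] [SMul R P]
    (gr : OUGrading G R) (gmM : GrModule gr M) (gmN : GrModule gr N) (gmP : GrModule gr P)
    (f : M → P) (g : N → P) (h : M → N)
    (hgl : (∀ x y : N, g (x + y) = g x + g y) ∧ ∀ (r : R) (x : N), g (r • x) = r • g x)
    (hhl : (∀ x y : M, h (x + y) = h x + h y) ∧ ∀ (r : R) (x : M), h (r • x) = r • h x)
    (hfac : ∀ m : M, f m = g (h m)) :
    ((∀ σ : GArrow G, ∀ x ∈ gmM.component σ, f x ∈ gmP.component σ) →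
      (∀ σ : GArrow G, ∀ x ∈ gmN.component σ, g x ∈ gmP.component σ) →
      ∃ h' : M → N, IsGrHom (R := R) gmM.component gmN.component h' ∧ ∀ m : M, f m = g (h' m)) ∧
    ((∀ σ : GArrow G, ∀ x ∈ gmM.component σ, f x ∈ gmP.component σ) →
      (∀ σ : GArrow G, ∀ x ∈ gmM.component σ, h x ∈ gmN.component σ) →
      ∃ g' : N → P, IsGrHom (R := R) gmN.component gmP.component g' ∧ ∀ m : M, f m = g' (h m)) := by
  classical
  let := gr.isInternal.chooseDecomposition
  let := gmM.isInternal.chooseDecomposition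
  let := gmN.isInternal.chooseDecomposition
  let := gmP.isInternal.chooseDecomposition
  let gH : N →+ P := AddMonoidHom.mk' g hgl.1
  let hH : M →+ N := AddMonoidHom.mk' h hhl.1
  have hgh_graded (hf : ∀ σ, ∀ x ∈ gmM.component σ, f x ∈ gmP.component σ) :
      ∀ σ, ∀ x ∈ gmM.component σ, gH.comp hH x ∈ gmP.component σ :=
    fun σ x hx => (hfac x ▸ hf σ x hx : g (h x) ∈ gmP.component σ)
  refine ⟨fun hf hg => ⟨_, gmM.isGrHom_degreePart gmN hH hhl.2, fun m => ?_⟩,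
    fun hf hh => ⟨_, gmN.isGrHom_degreePart gmP gH hgl.2, fun m => ?_⟩⟩
  · calc f m = gH.comp hH m := hfac m
      _ = DirectSum.degreePart _ _ (gH.comp hH) m := by
        rw [DirectSum.degreePart_eq_self (hgh_graded hf)]
      _ = g (DirectSum.degreePart _ _ hH m) := by
        rw [DirectSum.degreePart_comp_of_graded_left hH hg]
        rfl
  · calc f m = gH.comp hH m := hfac m
      _ = DirectSum.degreePart _ _ (gH.comp hH) m := by
        rw [DirectSum.degreePart_eq_self (hgh_graded hf)]
      _ = DirectSum.degreePart _ _ gH (h m) := by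
        rw [DirectSum.degreePart_comp_of_graded_right gH hh]
        rfl

/-- (Graded factorization lemma.) If `f = g ∘ h` with `f, g, h`
`R`-linear: when `f` and `g` are graded there is a graded `h'` with `f = g ∘ h'`;
when `f` and `h` are graded there is a graded `g'` with `f = g' ∘ h`. -/
theorem stmt12 {G R M N P : Type*} [Groupoid G] [NonUnitalRing R]
    [AddCommGroup M] [AddCommGroup N] [AddCommGroup P] [SMul R M] [SMul R N] [SMul R P]
    (gr : OUGrading G R) (gmM : GrModule gr M) (gmN : GrModule gr N) (gmP : GrModule gr P)
    (f : M → P) (g : N → P) (h : M → N)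
    (hfl : (∀ x y : M, f (x + y) = f x + f y) ∧ ∀ (r : R) (x : M), f (r • x) = r • f x)
    (hgl : (∀ x y : N, g (x + y) = g x + g y) ∧ ∀ (r : R) (x : N), g (r • x) = r • g x)
    (hhl : (∀ x y : M, h (x + y) = h x + h y) ∧ ∀ (r : R) (x : M), h (r • x) = r • h x)
    (hfac : ∀ m : M, f m = g (h m)) :
    ((∀ σ : GArrow G, ∀ x ∈ gmM.component σ, f x ∈ gmP.component σ) →
      (∀ σ : GArrow G, ∀ x ∈ gmN.component σ, g x ∈ gmP.component σ) →
      ∃ h' : M → N, IsGrHom (R := R) gmM.component gmN.component h' ∧ ∀ m : M, f m = g (h' m)) ∧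
    ((∀ σ : GArrow G, ∀ x ∈ gmM.component σ, f x ∈ gmP.component σ) →
      (∀ σ : GArrow G, ∀ x ∈ gmM.component σ, h x ∈ gmN.component σ) →
      ∃ g' : N → P, IsGrHom (R := R) gmN.component gmP.component g' ∧ ∀ m : M, f m = g' (h m)) :=
  stmt12_general gr gmM gmN gmP f g h hgl hhl hfac
end

section
/- Let R be an object unital G-graded ring and M a graded unital left R-module. The following are equivalent: (i) M is a sum of simple graded submodules; (ii) M is a direct sum of simple graded submodules; (iii) every graded submodule of M is a direct summand (with graded complement). -/
open CategoryTheory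

/-- A simple graded submodule: a nonzero graded submodule whose only graded submodules
are `⊥` and itself. -/
def GrSimpleSub {G R M : Type*} [Groupoid G] [NonUnitalRing R] [AddCommGroup M]
    [SMul R M] {gr : OUGrading G R} (gm : GrModule gr M) (N : AddSubgroup M) : Prop :=
  IsGrSubmodule gm N ∧ N ≠ ⊥ ∧
    ∀ K : AddSubgroup M, IsGrSubmodule gm K → K ≤ N → K = ⊥ ∨ K = N


/-! The graded submodules of `M` form a complete sublattice of the additive subgroups: sums of
graded submodules are graded, and so are intersections, because a graded submodule is exactly
one that is stable under the projections onto the homogeneous components. This lattice is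
modular, and it is compactly generated by the graded submodules `ℤm + Rm` spanned by single
homogeneous elements `m`. Its atoms are the simple graded submodules, so (i) says that the
atoms have supremum `⊤`, (ii) that `⊤` is an independent supremum of atoms, and (iii) that the
lattice is complemented; in a modular, compactly generated lattice these are equivalent. -/

namespace AddSubgroup

open DirectSum

variable {ι A : Type*} [AddCommGroup A]

theorem isInternal_of_iSupIndep {c : ι → AddSubgroup A} [DecidableEq ι] (hind : iSupIndep c)
    (htop : ⨆ i, c i = ⊤) : IsInternal c := by
  show IsInternal fun i => (c i).toIntSubmodule
  rw [isInternal_submodule_iff_iSupIndep_and_iSup_eq_top]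
  refine ⟨(iSupIndep_map_orderIso_iff toIntSubmodule).mpr hind, ?_⟩
  rw [← _root_.map_iSup toIntSubmodule c, htop, map_top]

theorem isHomogeneous_iff_eq_iSup_inf (c : ι → AddSubgroup A) [DecidableEq ι]
    [Decomposition c] (N : AddSubgroup A) :
    SetLike.IsHomogeneous c N ↔ N = ⨆ i, N ⊓ c i := by
  refine ⟨fun h => le_antisymm (fun x hx => ?_) (iSup_le fun _ => inf_le_left),
    fun h i x hx => ?_⟩
  · classical
    rw [← sum_support_decompose c x]
    exact sum_mem fun j _ => mem_iSup_of_mem j ⟨h j hx, (decompose c x j).2⟩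
  · rw [h] at hx
    refine iSup_induction _ (C := fun x => (decompose c x i : A) ∈ N) hx (fun j y hy => ?_)
      (by simp) fun y z hy hz => by simpa using add_mem hy hz
    by_cases hij : j = i
    · subst hij
      rw [decompose_of_mem_same c hy.2]
      exact hy.1
    · rw [decompose_of_mem_ne c hy.2 hij]
      exact zero_mem N

theorem sSup_eq_iSup_inf {c : ι → AddSubgroup A} {S : Set (AddSubgroup A)}
    (hS : ∀ N ∈ S, N = ⨆ i, N ⊓ c i) : sSup S = ⨆ i, sSup S ⊓ c i := by
  refine le_antisymm (sSup_le fun N hN => ?_) (iSup_le fun _ => inf_le_left)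
  rw [hS N hN]
  exact iSup_mono fun i => inf_le_inf_right _ (le_sSup hN)

theorem sInf_eq_iSup_inf {c : ι → AddSubgroup A} (hind : iSupIndep c) (htop : ⨆ i, c i = ⊤)
    {S : Set (AddSubgroup A)} (hS : ∀ N ∈ S, N = ⨆ i, N ⊓ c i) :
    sInf S = ⨆ i, sInf S ⊓ c i := by
  classical
  let := (isInternal_of_iSupIndep hind htop).chooseDecomposition
  simp only [← isHomogeneous_iff_eq_iSup_inf] at hS ⊢
  exact fun i x hx => mem_sInf.2 fun N hN => hS N hN i (mem_sInf.1 hx N hN)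

end AddSubgroup

namespace CompleteSublattice

variable {α : Type*} [CompleteLattice α] {L : CompleteSublattice α}

instance [IsModularLattice α] : IsModularLattice L :=
  ⟨fun {_} y _ hxz => IsModularLattice.sup_inf_le_assoc_of_le (α := α) (y : α) hxz⟩

theorem sSupIndep_image_coe {s : Set L} (hs : sSupIndep s) : sSupIndep ((↑) '' s : Set α) := by
  rintro _ ⟨a, ha, rfl⟩
  have := CompleteSublattice.disjoint_iff.1 (hs ha)
  rwa [coe_sSup, ← Set.image, Set.image_sdiff Subtype.coe_injective, Set.image_singleton] at this

end CompleteSublattice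

section smulSpan

variable (R : Type*) {M : Type*} [AddCommGroup M] [SMul R M]

-- `m` itself is a generator because `R` need not act unitally on it.
def smulSpan (m : M) : AddSubgroup M :=
  AddSubgroup.closure (insert m (Set.range (· • m : R → M)))

theorem mem_smulSpan_self (m : M) : m ∈ smulSpan R m :=
  AddSubgroup.subset_closure (Set.mem_insert m _)

theorem smul_mem_smulSpan (r : R) (m : M) : r • m ∈ smulSpan R m :=
  AddSubgroup.subset_closure (Set.mem_insert_of_mem m ⟨r, rfl⟩)

variable {R}

theorem smulSpan_le {m : M} {N : AddSubgroup M} (hN : ∀ r : R, ∀ x ∈ N, r • x ∈ N)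
    (hm : m ∈ N) : smulSpan R m ≤ N :=
  (AddSubgroup.closure_le N).2 (Set.insert_subset hm (Set.range_subset_iff.2 fun r => hN r m hm))

end smulSpan

namespace GrModule

variable {G R M : Type*} [Groupoid G] [NonUnitalRing R] [AddCommGroup M] [SMul R M]
  {gr : OUGrading G R} (gm : GrModule gr M)

def smulLeft (r : R) : M →+ M := AddMonoidHom.mk' (r • ·) (gm.smul_add r)

def smulRight_s18 (m : M) : R →+ M := AddMonoidHom.mk' (· • m) fun r s => gm.add_smul r s m

theorem isGrSubmodule_sSup {S : Set (AddSubgroup M)} (hS : ∀ N ∈ S, IsGrSubmodule gm N) :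
    IsGrSubmodule gm (sSup S) := by
  refine ⟨fun r => ?_, AddSubgroup.sSup_eq_iSup_inf fun N hN => (hS N hN).2⟩
  show sSup S ≤ (sSup S).comap (gm.smulLeft r)
  refine sSup_le fun N hN => le_trans ?_ (AddSubgroup.comap_mono (le_sSup hN))
  exact (hS N hN).1 r

theorem isGrSubmodule_sInf {S : Set (AddSubgroup M)} (hS : ∀ N ∈ S, IsGrSubmodule gm N) :
    IsGrSubmodule gm (sInf S) :=
  ⟨fun r _ hx => AddSubgroup.mem_sInf.2 fun N hN =>
      (hS N hN).1 r _ (AddSubgroup.mem_sInf.1 hx N hN),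
    AddSubgroup.sInf_eq_iSup_inf gm.indep gm.sup_eq_top fun N hN => (hS N hN).2⟩

def grSubmodules : CompleteSublattice (AddSubgroup M) :=
  CompleteSublattice.mk' {N | IsGrSubmodule gm N} (fun _ => gm.isGrSubmodule_sSup)
    (fun _ => gm.isGrSubmodule_sInf)

theorem isGrSubmodule_smulSpan {σ : GArrow G} {m : M} (hm : m ∈ gm.component σ) :
    IsGrSubmodule gm (smulSpan R m) := by
  refine ⟨fun r => ?_, le_antisymm ?_ (iSup_le fun _ => inf_le_left)⟩
  · show smulSpan R m ≤ (smulSpan R m).comap (gm.smulLeft r)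
    refine (AddSubgroup.closure_le _).2 (Set.insert_subset (smul_mem_smulSpan R r m) ?_)
    rintro _ ⟨s, rfl⟩
    show r • s • m ∈ smulSpan R m
    rw [← gm.mul_smul]
    exact smul_mem_smulSpan R _ m
  · refine (AddSubgroup.closure_le _).2 (Set.insert_subset
      (AddSubgroup.mem_iSup_of_mem σ ⟨mem_smulSpan_self R m, hm⟩) ?_)
    rintro _ ⟨r, rfl⟩
    suffices ⨆ τ, gr.component τ ≤ (⨆ σ', smulSpan R m ⊓ gm.component σ').comap
        (gm.smulRight_s18 m) from this (gr.sup_eq_top ▸ AddSubgroup.mem_top r)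
    refine iSup_le fun τ s hs => ?_
    by_cases h : GArrow.Composable τ σ
    · exact AddSubgroup.mem_iSup_of_mem (GArrow.comp τ σ h)
        ⟨smul_mem_smulSpan R s m, gm.smul_mem τ σ h s hs m hm⟩
    · show s • m ∈ ⨆ σ', smulSpan R m ⊓ gm.component σ'
      rw [gm.smul_eq_zero τ σ h s hs m hm]
      exact zero_mem _

theorem isCompactElement_of_coe_eq_smulSpan {K : gm.grSubmodules} {m : M}
    (hK : (K : AddSubgroup M) = smulSpan R m) : IsCompactElement K := by
  rw [CompleteLattice.isCompactElement_iff_le_of_directed_sSup_le]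
  intro s hne hdir hle
  have hm : m ∈ sSup ((↑) '' s : Set (AddSubgroup M)) := hle (hK ▸ mem_smulSpan_self R m)
  obtain ⟨_, ⟨N, hN, rfl⟩, hmN⟩ := (AddSubgroup.mem_sSup_of_directedOn (hne.image _)
    ((directedOn_image).2 (hdir.mono fun _ _ h => h))).1 hm
  exact ⟨N, hN, show (K : AddSubgroup M) ≤ N from hK ▸ smulSpan_le N.2.1 hmN⟩

instance : IsCompactlyGenerated gm.grSubmodules where
  exists_sSup_eq N := by
    set S := {K : gm.grSubmodules |
      ∃ m ∈ (N : AddSubgroup M), (K : AddSubgroup M) = smulSpan R m}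
    refine ⟨S, fun K ⟨_, _, hK⟩ => gm.isCompactElement_of_coe_eq_smulSpan hK,
      le_antisymm ?_ ?_⟩
    · refine sSup_le ?_
      rintro K ⟨m, hm, hK⟩
      show (K : AddSubgroup M) ≤ N
      exact hK ▸ smulSpan_le N.2.1 hm
    · have hN : (N : AddSubgroup M) = ⨆ σ, (N : AddSubgroup M) ⊓ gm.component σ := N.2.2
      show (N : AddSubgroup M) ≤ sSup ((↑) '' S)
      refine hN.le.trans (iSup_le fun σ m hm => ?_)
      have hK : (⟨smulSpan R m, gm.isGrSubmodule_smulSpan hm.2⟩ : gm.grSubmodules) ∈ S :=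
        ⟨m, hm.1, rfl⟩
      exact le_sSup (Set.mem_image_of_mem Subtype.val hK) (mem_smulSpan_self R m)

theorem isAtom_iff_grSimpleSub {N : gm.grSubmodules} : IsAtom N ↔ GrSimpleSub gm N := by
  refine ⟨fun h => ⟨N.2, fun h0 => h.1 (Subtype.ext h0), fun K hK hKN => ?_⟩,
    fun h => ⟨fun h0 => h.2.1 (congrArg Subtype.val h0), fun K hK => Subtype.ext ?_⟩⟩
  · exact (h.le_iff.1 (show (⟨K, hK⟩ : gm.grSubmodules) ≤ N from hKN)).imp
      (congrArg Subtype.val) (congrArg Subtype.val)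
  · exact (h.2.2 K K.2 hK.le).resolve_right fun e => hK.ne (Subtype.ext e)

theorem exists_grSimpleSub_sSup_eq_top_iff :
    (∃ S : Set (AddSubgroup M), (∀ N ∈ S, GrSimpleSub gm N) ∧ sSup S = ⊤) ↔
      sSup {N : gm.grSubmodules | IsAtom N} = ⊤ := by
  rw [← Subtype.coe_inj, CompleteSublattice.coe_sSup, CompleteSublattice.coe_top]
  refine ⟨fun ⟨S, hS, htop⟩ => eq_top_iff.2 (htop ▸ sSup_le_sSup ?_),
    fun h => ⟨_, ?_, h⟩⟩
  · exact fun N hN => ⟨⟨N, (hS N hN).1⟩, gm.isAtom_iff_grSimpleSub.2 (hS N hN), rfl⟩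
  · rintro _ ⟨N, hN, rfl⟩
    exact gm.isAtom_iff_grSimpleSub.1 hN

theorem complementedLattice_grSubmodules_iff :
    ComplementedLattice gm.grSubmodules ↔ ∀ N : AddSubgroup M, IsGrSubmodule gm N →
      ∃ C : AddSubgroup M, IsGrSubmodule gm C ∧ N ⊓ C = ⊥ ∧ N ⊔ C = ⊤ := by
  simp only [CompleteSublattice.isComplemented_iff, isCompl_iff, disjoint_iff, codisjoint_iff]
  rfl

end GrModule

theorem stmt18_general {G R M : Type*} [Groupoid G] [NonUnitalRing R] [AddCommGroup M] [SMul R M]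
    (gr : OUGrading G R) (gm : GrModule gr M) :
    ((∃ S : Set (AddSubgroup M), (∀ N ∈ S, GrSimpleSub gm N) ∧ sSup S = ⊤) ↔
      (∃ S : Set (AddSubgroup M), (∀ N ∈ S, GrSimpleSub gm N) ∧ sSupIndep S ∧
        sSup S = ⊤)) ∧
    ((∃ S : Set (AddSubgroup M), (∀ N ∈ S, GrSimpleSub gm N) ∧ sSup S = ⊤) ↔
      (∀ N : AddSubgroup M, IsGrSubmodule gm N →
        ∃ C : AddSubgroup M, IsGrSubmodule gm C ∧ N ⊓ C = ⊥ ∧ N ⊔ C = ⊤)) := by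
  rw [gm.exists_grSimpleSub_sSup_eq_top_iff, ← gm.complementedLattice_grSubmodules_iff]
  refine ⟨⟨fun h => ?_, fun ⟨S, hS, _, htop⟩ => gm.exists_grSimpleSub_sSup_eq_top_iff.1
    ⟨S, hS, htop⟩⟩, ?_, ?_⟩
  · obtain ⟨s, hind, htop, hatoms⟩ := exists_sSupIndep_of_sSup_atoms_eq_top h
    refine ⟨(↑) '' s, ?_, CompleteSublattice.sSupIndep_image_coe hind, ?_⟩
    · rintro _ ⟨N, hN, rfl⟩
      exact gm.isAtom_iff_grSimpleSub.1 (hatoms hN)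
    · rw [← CompleteSublattice.coe_top, ← htop, CompleteSublattice.coe_sSup]
      rfl
  · exact complementedLattice_of_sSup_atoms_eq_top
  · intro _
    exact sSup_atoms_eq_top

/-- For a graded unital module `M` the following are equivalent:
(i) `M` is a sum of simple graded submodules; (ii) `M` is a direct sum of simple graded
submodules; (iii) every graded submodule of `M` is a direct summand with graded
complement. -/
theorem stmt18 {G R M : Type*} [Groupoid G] [NonUnitalRing R] [AddCommGroup M] [SMul R M]
    (gr : OUGrading G R) (gm : GrModule gr M) (hu : gm.IsUnital) :
    ((∃ S : Set (AddSubgroup M), (∀ N ∈ S, GrSimpleSub gm N) ∧ sSup S = ⊤) ↔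
      (∃ S : Set (AddSubgroup M), (∀ N ∈ S, GrSimpleSub gm N) ∧ sSupIndep S ∧
        sSup S = ⊤)) ∧
    ((∃ S : Set (AddSubgroup M), (∀ N ∈ S, GrSimpleSub gm N) ∧ sSup S = ⊤) ↔
      (∀ N : AddSubgroup M, IsGrSubmodule gm N →
        ∃ C : AddSubgroup M, IsGrSubmodule gm C ∧ N ⊓ C = ⊥ ∧ N ⊔ C = ⊤)) :=
  stmt18_general gr gm
end
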